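/- arXiv:1609.01974 — 7 statements merged into one kernel-verified Lean document; each statement's English description precedes it below -/
import Mathlib

section
/- There exists ε₀ ∈ (0, 1/10) such that for every ε ∈ (0, ε₀) there is a unique real number r ∈ (0,1) satisfying ε·e^r = sinh(r/2); moreover this unique solution r satisfies 2ε < r < 3ε. -/
private lemma key_mono (r₁ r₂ : ℝ) (h0 : 0 ≤ r₁) (h12 : r₁ < r₂) (h1 : r₂ ≤ 1) :
    Real.exp (-r₁/2) - Real.exp (-(3*r₁)/2) < Real.exp (-r₂/2) - Real.exp (-(3*r₂)/2) := by
  set u := Real.exp (-r₁/2) with hu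
  set v := Real.exp (-r₂/2) with hv
  have hu3 : Real.exp (-(3*r₁)/2) = u * u * u := by
    rw [hu, ← Real.exp_add, ← Real.exp_add]; congr 1; ring
  have hv3 : Real.exp (-(3*r₂)/2) = v * v * v := by
    rw [hv, ← Real.exp_add, ← Real.exp_add]; congr 1; ring
  have hvu : v < u := Real.exp_lt_exp.2 (by linarith)
  have hv0 : 0 < v := Real.exp_pos _
  have hv2 : (1:ℝ)/3 < v * v := by
    have h1' : Real.exp (-1) ≤ v * v := by
      rw [hv, ← Real.exp_add]
      exact Real.exp_le_exp.2 (by linarith)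
    have he : Real.exp 1 < 3 := lt_trans Real.exp_one_lt_d9 (by norm_num)
    have hp : (0:ℝ) < Real.exp 1 := Real.exp_pos 1
    have : (1:ℝ)/3 < Real.exp (-1) := by
      rw [Real.exp_neg]
      have hinv : Real.exp 1 * (Real.exp 1)⁻¹ = 1 := mul_inv_cancel₀ (ne_of_gt hp)
      nlinarith
    linarith
  rw [hu3, hv3]
  nlinarith [mul_pos (sub_pos.2 hvu) hv0, sq_nonneg (u - v), mul_pos hv0 hv0,
    mul_pos (mul_pos (sub_pos.2 hvu) hv0) hv0]

private lemma eq_iff (ε r : ℝ) :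
    ε * Real.exp r = Real.sinh (r/2) ↔ Real.exp (-r/2) - Real.exp (-(3*r)/2) = 2*ε := by
  have e1 : Real.exp (-r/2) * Real.exp r = Real.exp (r/2) := by
    rw [← Real.exp_add]; congr 1; ring
  have e2 : Real.exp (-(3*r)/2) * Real.exp r = Real.exp (-(r/2)) := by
    rw [← Real.exp_add]; congr 1; ring
  have hp : (0:ℝ) < Real.exp r := Real.exp_pos r
  rw [Real.sinh_eq]
  constructor
  · intro h
    have h2 : (Real.exp (-r/2) - Real.exp (-(3*r)/2)) * Real.exp r = 2 * ε * Real.exp r := by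
      rw [sub_mul, e1, e2]; linarith
    have := mul_right_cancel₀ (ne_of_gt hp) h2
    linarith
  · intro h
    have h2 : (Real.exp (-r/2) - Real.exp (-(3*r)/2)) * Real.exp r = 2 * ε * Real.exp r := by
      rw [h]
    rw [sub_mul, e1, e2] at h2
    nlinarith

/-- There exists ε₀ ∈ (0, 1/10) such that for every ε ∈ (0, ε₀) there is a unique
real number r ∈ (0,1) satisfying ε·e^r = sinh(r/2); moreover this unique solution
r satisfies 2ε < r < 3ε. -/
theorem stmt_0 :
    ∃ ε₀ : ℝ, 0 < ε₀ ∧ ε₀ < 1/10 ∧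
      ∀ ε : ℝ, 0 < ε → ε < ε₀ →
        (∃! r : ℝ, r ∈ Set.Ioo (0:ℝ) 1 ∧ ε * Real.exp r = Real.sinh (r/2)) ∧
        (∀ r : ℝ, r ∈ Set.Ioo (0:ℝ) 1 → ε * Real.exp r = Real.sinh (r/2) →
          2*ε < r ∧ r < 3*ε) := by
  refine ⟨1/20, by norm_num, by norm_num, ?_⟩
  intro ε hε hε'
  set f : ℝ → ℝ := fun r => Real.exp (-r/2) - Real.exp (-(3*r)/2) with hf
  -- endpoint bounds
  have hlow : f (2*ε) < 2*ε := by
    have hab : Real.exp (-(3*(2*ε))/2) = Real.exp (-(2*ε)/2) * Real.exp (-(2*ε)) := by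
      rw [← Real.exp_add]; congr 1; ring
    have ha1 : Real.exp (-(2*ε)/2) < 1 := by
      rw [show (1:ℝ) = Real.exp 0 by simp]
      exact Real.exp_lt_exp.2 (by linarith)
    have hb1 : Real.exp (-(2*ε)) < 1 := by
      rw [show (1:ℝ) = Real.exp 0 by simp]
      exact Real.exp_lt_exp.2 (by linarith)
    have hb2 : 1 - 2*ε ≤ Real.exp (-(2*ε)) := by
      have := Real.add_one_le_exp (-(2*ε)); linarith
    have ha0 : 0 < Real.exp (-(2*ε)/2) := Real.exp_pos _
    simp only [hf, hab]
    nlinarith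
  have hhigh : 2*ε < f (3*ε) := by
    have hc : Real.exp (-(3*ε)/2) = Real.exp ((3*ε)/2) * Real.exp (-(3*ε)) := by
      rw [← Real.exp_add]; congr 1; ring
    have hc2 : Real.exp (-(3*(3*ε))/2) = Real.exp (-((3*ε)/2)) * Real.exp (-(3*ε)) := by
      rw [← Real.exp_add]; congr 1; ring
    have hs : (3*ε)/2 < Real.sinh ((3*ε)/2) := Real.self_lt_sinh_iff.2 (by linarith)
    rw [Real.sinh_eq] at hs
    have hb2 : 1 - 3*ε ≤ Real.exp (-(3*ε)) := by
      have := Real.add_one_le_exp (-(3*ε)); linarith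
    have hb0 : 0 < Real.exp (-(3*ε)) := Real.exp_pos _
    simp only [hf, hc, hc2]
    have h3 : Real.exp ((3*ε)/2) - Real.exp (-((3*ε)/2)) > 3*ε := by linarith
    have h4 : (2:ℝ)/3 ≤ Real.exp (-(3*ε)) := by linarith
    calc 2*ε = 3*ε * ((2:ℝ)/3) := by ring
    _ ≤ 3*ε * Real.exp (-(3*ε)) := by nlinarith
    _ < (Real.exp ((3*ε)/2) - Real.exp (-((3*ε)/2))) * Real.exp (-(3*ε)) := by nlinarith
    _ = Real.exp ((3*ε)/2) * Real.exp (-(3*ε)) - Real.exp (-((3*ε)/2)) * Real.exp (-(3*ε)) := by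
        ring
  -- the bound part
  have hbound : ∀ r : ℝ, r ∈ Set.Ioo (0:ℝ) 1 → ε * Real.exp r = Real.sinh (r/2) →
      2*ε < r ∧ r < 3*ε := by
    intro r hr heq
    have hfr : Real.exp (-r/2) - Real.exp (-(3*r)/2) = 2*ε := (eq_iff ε r).1 heq
    have hlow' : Real.exp (-(2*ε)/2) - Real.exp (-(3*(2*ε))/2) < 2*ε := hlow
    have hhigh' : 2*ε < Real.exp (-(3*ε)/2) - Real.exp (-(3*(3*ε))/2) := hhigh
    constructor
    · by_contra h
      push_neg at h
      rcases eq_or_lt_of_le h with h' | h'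
      · rw [← h'] at hlow'; linarith
      · have := key_mono r (2*ε) (le_of_lt hr.1) h' (by linarith)
        linarith
    · by_contra h
      push_neg at h
      rcases eq_or_lt_of_le h with h' | h'
      · rw [h'] at hhigh'; linarith
      · have := key_mono (3*ε) r (by linarith) h' (le_of_lt hr.2)
        linarith
  refine ⟨?_, hbound⟩
  -- existence via IVT
  have hcont : Continuous f := by
    apply Continuous.sub <;> exact Real.continuous_exp.comp (by continuity)
  have hab : (2*ε : ℝ) ≤ 3*ε := by linarith
  have hsub := intermediate_value_Icc hab hcont.continuousOn
  have hmem : (2*ε : ℝ) ∈ Set.Icc (f (2*ε)) (f (3*ε)) := ⟨le_of_lt hlow, le_of_lt hhigh⟩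
  obtain ⟨r, hrI, hfr⟩ := hsub hmem
  have hr01 : r ∈ Set.Ioo (0:ℝ) 1 := ⟨by linarith [hrI.1], by linarith [hrI.2]⟩
  have heq : ε * Real.exp r = Real.sinh (r/2) := (eq_iff ε r).2 hfr
  refine ⟨r, ⟨hr01, heq⟩, ?_⟩
  intro y hy
  have hfy : f y = 2*ε := (eq_iff ε y).1 hy.2

  have hfy' : Real.exp (-y/2) - Real.exp (-(3*y)/2) = 2*ε := hfy
  have hfr' : Real.exp (-r/2) - Real.exp (-(3*r)/2) = 2*ε := hfr
  rcases lt_trichotomy y r with h | h | h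
  · exfalso
    have := key_mono y r (le_of_lt hy.1.1) h (le_of_lt hr01.2)
    linarith
  · exact h
  · exfalso
    have := key_mono r y (le_of_lt hr01.1) h (le_of_lt hy.1.2)
    linarith
end

section
/- There exists ε₀ > 0 such that for every ε ∈ (0, ε₀) the following holds. Let r_ε be the unique solution in (0,1) of ε e^r = sinh(r/2), let b_ε = (r_ε − ε⁴)/2, and let q(r) = cosh(b_ε/2) + (1/2) sinh(b_ε/2)(r − b_ε) + ε⁶(r − b_ε)². Then there exist real numbers a_ε < m_ε < b_ε and a continuously differentiable function h : ℝ → ℝ such that: (1) h is positive and increasing; (2) h(r) = cosh(r/2) for all r ≥ b_ε; (3) h(r) = q(r) for all r ∈ [m_ε, b_ε]; (4) on the interval (a_ε, m_ε), h is infinitely differentiable, h′′ > h/4, (ln h)′′ > 0, and h′/h ∈ [1/2, 3/4]; (5) h(r) = e^{r/2} for all r ≤ a_ε. -/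
open Real Set

lemma aux_sinh_le_mul_exp {x : ℝ} (hx : 0 ≤ x) : Real.sinh x ≤ x * Real.exp x := by
  rw [Real.sinh_eq]
  have h1 : (-(2*x)) + 1 ≤ Real.exp (-(2*x)) := Real.add_one_le_exp _
  have h2 : Real.exp (-x) = Real.exp x * Real.exp (-(2*x)) := by
    rw [← Real.exp_add]; ring_nf
  nlinarith [Real.exp_pos x]

lemma aux_diff_const {f g φ : ℝ → ℝ} {c d : ℝ}
    (hf : ∀ x ∈ Set.Icc c d, HasDerivAt f (φ x) x)
    (hg : ∀ x ∈ Set.Icc c d, HasDerivAt g (φ x) x) :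
    ∀ x ∈ Set.Icc c d, f x - g x = f c - g c := by
  intro x hx
  exact constant_of_has_deriv_right_zero (f := fun y => f y - g y) (a := c) (b := d)
    (fun y hy => (((hf y hy).sub (hg y hy)).continuousAt).continuousWithinAt)
    (fun y hy => by
      have h0 : HasDerivAt (fun y => f y - g y) 0 y := by
        have h1 := (hf y (Set.Ico_subset_Icc_self hy)).sub (hg y (Set.Ico_subset_Icc_self hy))
        rw [sub_self] at h1
        exact h1
      exact h0.hasDerivWithinAt) x hx

set_option maxHeartbeats 4000000 in
/-- Existence of the C¹ warping function h interpolating between e^{r/2} and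
cosh(r/2), with b_ε = (r_ε − ε⁴)/2 and
q(r) = cosh(b_ε/2) + (1/2)sinh(b_ε/2)(r − b_ε) + ε⁶(r − b_ε)². -/
theorem stmt_5 :
    ∃ ε₀ : ℝ, 0 < ε₀ ∧
      ∀ ε : ℝ, 0 < ε → ε < ε₀ →
        ∀ rε : ℝ, rε ∈ Set.Ioo (0:ℝ) 1 → ε * Real.exp rε = Real.sinh (rε/2) →
          ∃ aε mε : ℝ, ∃ h : ℝ → ℝ,
            aε < mε ∧ mε < (rε - ε^4)/2 ∧
            ContDiff ℝ 1 h ∧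
            (∀ r, 0 < h r) ∧ StrictMono h ∧
            (∀ r, (rε - ε^4)/2 ≤ r → h r = Real.cosh (r/2)) ∧
            (∀ r ∈ Set.Icc mε ((rε - ε^4)/2),
              h r = Real.cosh ((rε - ε^4)/4)
                + (1/2) * Real.sinh ((rε - ε^4)/4) * (r - (rε - ε^4)/2)
                + ε^6 * (r - (rε - ε^4)/2)^2) ∧
            ContDiffOn ℝ (⊤ : ℕ∞) h (Set.Ioo aε mε) ∧
            (∀ r ∈ Set.Ioo aε mε, h r / 4 < deriv (deriv h) r) ∧
            (∀ r ∈ Set.Ioo aε mε,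
              0 < deriv (deriv (fun x => Real.log (h x))) r) ∧
            (∀ r ∈ Set.Ioo aε mε,
              deriv h r / h r ∈ Set.Icc (1/2 : ℝ) (3/4)) ∧
            (∀ r, r ≤ aε → h r = Real.exp (r/2)) := by
  classical
  refine ⟨1/10000, by norm_num, ?_⟩
  intro ε hε0 hεs rε hr heq
  obtain ⟨hr0, hr1⟩ := hr
  have hε1 : ε ≤ 1/10000 := le_of_lt hεs
  -- basic bounds on rε
  have hrε2 : 2*ε ≤ rε := by
    have h1 : Real.sinh (rε/2) ≤ (rε/2) * Real.exp (rε/2) :=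
      aux_sinh_le_mul_exp (by linarith)
    have h2 : Real.exp (rε/2) ≤ Real.exp rε := Real.exp_le_exp.2 (by linarith)
    have h3 : ε * Real.exp rε ≤ (rε/2) * Real.exp rε := by
      calc ε * Real.exp rε = Real.sinh (rε/2) := heq
        _ ≤ (rε/2) * Real.exp (rε/2) := h1
        _ ≤ (rε/2) * Real.exp rε := by
            have := Real.exp_pos (rε/2)
            nlinarith [Real.exp_pos rε]
    have := Real.exp_pos rε
    nlinarith
  have hrε6 : rε ≤ 6*ε := by
    have h1 : rε/2 ≤ Real.sinh (rε/2) := by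
      rw [Real.self_le_sinh_iff]; linarith
    have h2 : Real.exp rε ≤ Real.exp 1 := Real.exp_le_exp.2 (le_of_lt hr1)
    have h3 : Real.exp 1 < 3 := by
      have := Real.exp_one_lt_d9; linarith
    nlinarith
  -- small powers of ε
  have hε2 : ε^2 ≤ ε/10000 := by nlinarith
  have hε3 : ε^3 ≤ ε/10^8 := by nlinarith
  have hε4p : ε^4 ≤ ε/10^12 := by nlinarith
  have hε5 : ε^5 ≤ ε/10^16 := by nlinarith
  -- b and its bounds
  obtain ⟨b, hbdef⟩ : ∃ b : ℝ, b = (rε - ε^4)/2 := ⟨_, rfl⟩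
  rw [← hbdef]
  have hb24 : (rε - ε^4)/4 = b/2 := by rw [hbdef]; ring
  rw [hb24]
  have hε4 : ε^4 ≤ ε/2 := by linarith
  have hε4nn : 0 ≤ ε^4 := by positivity
  have hbl : ε/2 ≤ b := by rw [hbdef]; linarith
  have hbu : b ≤ 3*ε := by rw [hbdef]; linarith
  have hbpos : 0 < b := lt_of_lt_of_le (by positivity) hbl
  have hb1 : b ≤ 1/1000 := by linarith
  obtain ⟨A, hAdef⟩ : ∃ A : ℝ, A = Real.cosh (b/2) := ⟨_, rfl⟩
  obtain ⟨B, hBdef⟩ : ∃ B : ℝ, B = Real.sinh (b/2) / 2 := ⟨_, rfl⟩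
  obtain ⟨C, hCdef⟩ : ∃ C : ℝ, C = ε^6 := ⟨_, rfl⟩
  rw [← hCdef]
  have hCpos : 0 < C := by rw [hCdef]; positivity
  have hCu : C ≤ ε^5/10000 := by rw [hCdef]; nlinarith
  have hA1 : 1 ≤ A := hAdef ▸ Real.one_le_cosh _
  have hexpb : Real.exp (b/2) ≤ 2 := by
    have h1 : (-(b/2)) + 1 ≤ Real.exp (-(b/2)) := Real.add_one_le_exp _
    have h2 : Real.exp (b/2) * Real.exp (-(b/2)) = 1 := by
      rw [← Real.exp_add]; simp
    nlinarith [Real.exp_pos (b/2), Real.exp_pos (-(b/2))]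
  have hA2 : A ≤ 2 := by
    rw [hAdef, Real.cosh_eq]
    have : Real.exp (-(b/2)) ≤ 1 := Real.exp_le_one_iff.2 (by linarith)
    linarith
  have hBl : ε/8 ≤ B := by
    have h1 : b/2 ≤ Real.sinh (b/2) := by
      rw [Real.self_le_sinh_iff]; linarith
    rw [hBdef]; linarith
  have hBu : B ≤ 3*ε/2 := by
    have h1 : Real.sinh (b/2) ≤ (b/2) * Real.exp (b/2) :=
      aux_sinh_le_mul_exp (by linarith)
    have h2 : (b/2) * Real.exp (b/2) ≤ (b/2)*2 :=
      mul_le_mul_of_nonneg_left hexpb (by positivity)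
    rw [hBdef]; linarith
  have hBpos : 0 < B := lt_of_lt_of_le (by positivity) hBl
  obtain ⟨Q, hQfun⟩ : ∃ Q : ℝ → ℝ, Q = fun r => A + B*(r - b) + C*(r - b)^2 := ⟨_, rfl⟩
  have hQr : ∀ r, Q r = A + B*(r - b) + C*(r - b)^2 := fun r => by rw [hQfun]
  obtain ⟨δ, hδdef⟩ : ∃ δ : ℝ, δ = 8*B/5 := ⟨_, rfl⟩
  have hδpos : 0 < δ := by rw [hδdef]; positivity
  have hδu : δ ≤ 3*ε := by rw [hδdef]; linarith
  have hδl : ε/5 ≤ δ := by rw [hδdef]; linarith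
  have hQd : ∀ x : ℝ, HasDerivAt Q (B + 2*C*(x - b)) x := by
    intro x
    rw [hQfun]
    have h1 : HasDerivAt (fun r : ℝ => r - b) 1 x := by
      simpa using (hasDerivAt_id x).sub_const b
    have h2 := (((hasDerivAt_const x A)).add (h1.const_mul B)).add ((h1.pow 2).const_mul C)
    refine h2.congr_deriv ?_
    push_cast
    ring
  have hQcont : Continuous Q := by rw [hQfun]; continuity
  -- derivative positivity of Q on the relevant interval
  have hq'pos : ∀ x, b - 24/ε ≤ x → x ≤ b → ε/16 ≤ B + 2*C*(x - b) := by
    intro x h1 h2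
    have h3 : x - b ≥ -(24/ε) := by linarith
    have h4 : C*(x - b) ≥ -(24*ε^4/10000) := by
      have h5 : C*(24/ε) ≤ 24*ε^4/10000 := by
        rw [hCdef]
        have : ε^6 * (24/ε) = 24*ε^5 := by field_simp
        rw [this]; nlinarith
      nlinarith
    nlinarith
  -- IVT to find m
  have hc12 : b - 24/ε ≤ b - 1/(2*ε) := by
    have : 1/(2*ε) ≤ 24/ε := by
      rw [div_le_div_iff₀ (by positivity) (by positivity)]; nlinarith
    linarith
  have hQc1 : Q (b - 24/ε) ≤ δ := by
    have h1 : Q (b - 24/ε) = A - B*(24/ε) + C*(24/ε)^2 := by rw [hQr]; ring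
    have h2 : B*(24/ε) ≥ 3 := by
      have h2a : (ε/8) * (24/ε) = 3 := by field_simp; ring
      nlinarith [mul_le_mul_of_nonneg_right hBl (le_of_lt (show (0:ℝ) < 24/ε by positivity))]
    have h3 : C*(24/ε)^2 ≤ 1/2 := by
      rw [hCdef]
      have h3a : ε^6*(24/ε)^2 = 576*ε^4 := by field_simp; ring
      rw [h3a]; nlinarith
    rw [h1]; nlinarith
  have hQc2 : δ ≤ Q (b - 1/(2*ε)) := by
    have h1 : Q (b - 1/(2*ε)) = A - B*(1/(2*ε)) + C*(1/(2*ε))^2 := by rw [hQr]; ring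
    have h2 : B*(1/(2*ε)) ≤ 3/4 := by
      have h2a : (3*ε/2)*(1/(2*ε)) = 3/4 := by field_simp; ring
      nlinarith [mul_le_mul_of_nonneg_right hBu (le_of_lt (show (0:ℝ) < 1/(2*ε) by positivity))]
    have h3 : 0 ≤ C*(1/(2*ε))^2 := by positivity
    rw [h1]; nlinarith
  obtain ⟨m, hmIcc, hQm⟩ : ∃ m ∈ Icc (b - 24/ε) (b - 1/(2*ε)), Q m = δ := by
    have h1 := intermediate_value_Icc hc12 hQcont.continuousOn
    obtain ⟨m, hm1, hm2⟩ := h1 ⟨hQc1, hQc2⟩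
    exact ⟨m, hm1, hm2⟩
  obtain ⟨hm24, hm2e⟩ := hmIcc
  have hmb : m < b := by
    have : 0 < 1/(2*ε) := by positivity
    linarith
  -- monotonicity of Q on [m, b]
  have hQmono : StrictMonoOn Q (Icc m b) := by
    apply strictMonoOn_of_deriv_pos (convex_Icc m b) hQcont.continuousOn
    intro x hx
    rw [interior_Icc] at hx
    rw [(hQd x).deriv]
    have := hq'pos x (by linarith [hx.1]) (le_of_lt hx.2)
    linarith
  have hQge : ∀ x ∈ Icc m b, δ ≤ Q x := by
    intro x hx
    rcases eq_or_lt_of_le hx.1 with hh | hh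
    · rw [← hh, hQm]
    · exact le_of_lt (hQm ▸ hQmono ⟨le_refl m, le_of_lt hmb⟩ hx hh)
  have hQpos : ∀ x ∈ Icc m b, 0 < Q x := fun x hx => lt_of_lt_of_le hδpos (hQge x hx)
  -- v
  obtain ⟨v, hvdef⟩ : ∃ v : ℝ, v = (B + 2*C*(m - b))/δ := ⟨_, rfl⟩
  have hv58 : v ≤ 5/8 := by
    rw [hvdef, div_le_iff₀ hδpos, hδdef]
    have h1 : C*(m - b) ≤ 0 := mul_nonpos_of_nonneg_of_nonpos hCpos.le (by linarith)
    linarith only [h1]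
  have hv916 : 9/16 ≤ v := by
    rw [hvdef, le_div_iff₀ hδpos, hδdef]
    have h1 : 2*C*(b - m) ≤ 2*(ε^5/10000)*(24/ε) := by
      have hbm : b - m ≤ 24/ε := by linarith
      have hbm0 : 0 ≤ b - m := by linarith
      have h1a : C*(b - m) ≤ (ε^5/10000)*(24/ε) :=
        mul_le_mul hCu hbm hbm0 (by positivity)
      linarith only [h1a]
    have h2 : 2*(ε^5/10000)*(24/ε) = 48*ε^4/10000 := by field_simp; ring
    rw [h2] at h1
    have h3 : 48*ε^4/10000 ≤ ε/80 := by linarith only [hε4p, hε0.le]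
    linarith only [h1, h3, hBl]
  have hv12 : 1/2 < v := by linarith
  -- E
  obtain ⟨E, hEdef⟩ : ∃ E : ℝ, E = Real.log δ - m/2 := ⟨_, rfl⟩
  have hEpos : 0 < E := by
    have hs0 : 0 < Real.sqrt ε := Real.sqrt_pos.2 hε0
    have hs2 : Real.sqrt ε ^ 2 = ε := Real.sq_sqrt hε0.le
    have hs1 : Real.sqrt ε ≤ 1/100 := by
      have h1 : Real.sqrt ε ≤ Real.sqrt (1/10000) := Real.sqrt_le_sqrt hε1
      have h2 : Real.sqrt (1/10000) = 1/100 := by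
        rw [show (1/10000:ℝ) = (1/100)^2 by norm_num, Real.sqrt_sq (by norm_num)]
      linarith
    have hlog : Real.log (5/ε) ≤ 6/Real.sqrt ε - 2 := by
      have hy : (0:ℝ) < 5/ε := by positivity
      have h1 : Real.log (5/ε) = 2 * Real.log (Real.sqrt (5/ε)) := by
        rw [Real.log_sqrt hy.le]; ring
      have h2 : Real.log (Real.sqrt (5/ε)) ≤ Real.sqrt (5/ε) - 1 :=
        Real.log_le_sub_one_of_pos (Real.sqrt_pos.2 hy)
      have h3 : Real.sqrt (5/ε) ≤ 3/Real.sqrt ε := by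
        have h4 : (5/ε) ≤ (3/Real.sqrt ε)^2 := by
          rw [div_pow, hs2, div_le_div_iff₀ hε0 hε0]
          nlinarith only [hε0.le]
        calc Real.sqrt (5/ε) ≤ Real.sqrt ((3/Real.sqrt ε)^2) := Real.sqrt_le_sqrt h4
          _ = 3/Real.sqrt ε := Real.sqrt_sq (by positivity)
      have h5 : 6/Real.sqrt ε = 2*(3/Real.sqrt ε) := by ring
      linarith only [h1, h2, h3, h5]
    have hlogδ : Real.log (ε/5) ≤ Real.log δ := Real.log_le_log (by positivity) hδl
    have hlogε5 : -(6/Real.sqrt ε) + 2 ≤ Real.log (ε/5) := by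
      have h1 : (ε/5 : ℝ) = (5/ε)⁻¹ := by field_simp
      rw [h1, Real.log_inv]; linarith
    have hm2 : m ≤ 3*ε - 1/(2*ε) := by linarith
    have k1 : 6/Real.sqrt ε ≤ 1/(8*ε) := by
      rw [div_le_div_iff₀ hs0 (by positivity)]
      nlinarith only [hs0, hs1, hs2]
    have k2 : 3*ε/2 < 1/(8*ε) := by
      rw [div_lt_div_iff₀ (by norm_num) (by positivity)]
      nlinarith only [hε2, hε1, hε0]
    have k3 : 1/(8*ε) + 1/(8*ε) = 1/(4*ε) := by field_simp; ring
    have k4 : 1/(4*ε) + 1/(4*ε) = 1/(2*ε) := by field_simp; ring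
    rw [hEdef]
    have k5 : -(6/Real.sqrt ε) + 2 ≤ Real.log δ := by linarith only [hlog, hlogδ, hlogε5]
    linarith only [k1, k2, k3, k4, k5, hm2]
  -- L, a
  obtain ⟨L, hLdef⟩ : ∃ L : ℝ, L = 6*E/(v - 1/2) := ⟨_, rfl⟩
  have hLpos : 0 < L := by rw [hLdef]; exact div_pos (by linarith) (by linarith)
  obtain ⟨a, hadef⟩ : ∃ a : ℝ, a = m - L := ⟨_, rfl⟩
  have ham : a < m := by rw [hadef]; linarith
  have h6EL : 6*E/L = v - 1/2 := by
    rw [hLdef]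
    field_simp
  have hma : (m - a)/L = 1 := by
    rw [hadef]
    field_simp
    ring
  -- P, P₁, P₂
  obtain ⟨P, hPfun⟩ : ∃ P : ℝ → ℝ, P = fun r => r/2 + E*((r - a)/L)^6 := ⟨_, rfl⟩
  have hPr : ∀ r, P r = r/2 + E*((r - a)/L)^6 := fun r => by rw [hPfun]
  obtain ⟨P₁, hP₁fun⟩ : ∃ P₁ : ℝ → ℝ, P₁ = fun r => 1/2 + (v - 1/2)*((r - a)/L)^5 := ⟨_, rfl⟩
  have hP₁r : ∀ r, P₁ r = 1/2 + (v - 1/2)*((r - a)/L)^5 := fun r => by rw [hP₁fun]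
  obtain ⟨P₂, hP₂fun⟩ : ∃ P₂ : ℝ → ℝ, P₂ = fun r => (30*E/L^2)*((r - a)/L)^4 := ⟨_, rfl⟩
  have hP₂r : ∀ r, P₂ r = (30*E/L^2)*((r - a)/L)^4 := fun r => by rw [hP₂fun]
  have hdiv : ∀ x : ℝ, HasDerivAt (fun r : ℝ => (r - a)/L) (1/L) x := by
    intro x
    simpa using ((hasDerivAt_id x).sub_const a).div_const L
  have hPd : ∀ x, HasDerivAt P (P₁ x) x := by
    intro x
    rw [hPfun]
    have h3 := ((hasDerivAt_id x).div_const 2).add (((hdiv x).pow 6).const_mul E)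
    refine h3.congr_deriv ?_
    rw [hP₁r, ← h6EL]
    push_cast
    ring
  have hP₁d : ∀ x, HasDerivAt P₁ (P₂ x) x := by
    intro x
    rw [hP₁fun]
    have h3 := (((hdiv x).pow 5).const_mul (v - 1/2)).const_add (1/2 : ℝ)
    refine h3.congr_deriv ?_
    rw [hP₂r, ← h6EL]
    push_cast
    field_simp
    ring
  have hPm : P m = Real.log δ := by
    rw [hPr, hma, hEdef]; ring
  -- the glued log-derivative ψ
  obtain ⟨ψ, hψfun⟩ : ∃ ψ : ℝ → ℝ, ψ = fun r =>
      if r ≤ a then (1/2 : ℝ)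
      else if r ≤ m then P₁ r
      else if r ≤ b then (B + 2*C*(r - b)) / max (Q r) (δ/2)
      else Real.sinh (r/2) / Real.cosh (r/2) / 2 := ⟨_, rfl⟩
  have hψ₁ : ∀ r, r ≤ a → ψ r = 1/2 := by
    intro r h
    rw [hψfun]
    simp only [if_pos h]
  have hP₁a : P₁ a = 1/2 := by
    rw [hP₁r]; simp
  have hψ₂ : ∀ r ∈ Icc a m, ψ r = P₁ r := by
    intro r hr
    rcases eq_or_lt_of_le hr.1 with hh | hh
    · rw [hψ₁ r (le_of_eq hh.symm), ← hh, hP₁a]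
    · rw [hψfun]
      simp only [if_neg (not_le.2 hh), if_pos hr.2]
  have hP₁m : P₁ m = v := by
    rw [hP₁r, hma]; ring
  have hmaxQ : ∀ r ∈ Icc m b, max (Q r) (δ/2) = Q r := by
    intro r hr
    exact max_eq_left (by linarith [hQge r hr])
  have hψ₃ : ∀ r ∈ Icc m b, ψ r = (B + 2*C*(r - b)) / Q r := by
    intro r hr
    rcases eq_or_lt_of_le hr.1 with hh | hh
    · rw [hψ₂ r ⟨by linarith, le_of_eq hh.symm⟩, ← hh, hP₁m, hQm, hvdef]
    · rw [hψfun]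
      simp only [if_neg (not_le.2 (lt_trans ham hh)), if_neg (not_le.2 hh), if_pos hr.2]
      rw [hmaxQ r hr]
  have hQb : Q b = A := by rw [hQr]; ring
  have hψ₄ : ∀ r, b ≤ r → ψ r = Real.sinh (r/2) / Real.cosh (r/2) / 2 := by
    intro r hr
    rcases eq_or_lt_of_le hr with hh | hh
    · rw [hψ₃ r ⟨by linarith, le_of_eq hh.symm⟩, ← hh, hQb]
      simp only [sub_self, mul_zero, add_zero]
      rw [hAdef, hBdef]
      ring
    · rw [hψfun]
      have h1 : ¬ r ≤ a := not_le.2 (by linarith)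
      have h2 : ¬ r ≤ m := not_le.2 (by linarith)
      have h3 : ¬ r ≤ b := not_le.2 hh
      simp only [if_neg h1, if_neg h2, if_neg h3]
  have hψpos : ∀ r, 0 < ψ r := by
    intro r
    rcases le_or_gt r a with h1 | h1
    · rw [hψ₁ r h1]; norm_num
    rcases le_or_gt r m with h2 | h2
    · rw [hψ₂ r ⟨h1.le, h2⟩, hP₁r]
      have h3 : 0 ≤ (v - 1/2)*((r - a)/L)^5 :=
        mul_nonneg (by linarith) (pow_nonneg (div_nonneg (by linarith) hLpos.le) 5)
      linarith
    rcases le_or_gt r b with h3 | h3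
    · rw [hψ₃ r ⟨h2.le, h3⟩]
      apply div_pos
      · have := hq'pos r (by linarith) h3
        linarith
      · exact hQpos r ⟨h2.le, h3⟩
    · rw [hψ₄ r h3.le]
      have h4 : 0 < Real.sinh (r/2) := Real.sinh_pos_iff.2 (by linarith)
      exact div_pos (div_pos h4 (Real.cosh_pos _)) (by norm_num)
  have hP₁cont : Continuous P₁ := by
    rw [hP₁fun]
    exact continuous_const.add (continuous_const.mul
      (((continuous_id.sub continuous_const).div_const L).pow 5))
  have hQmaxne : ∀ x : ℝ, max (Q x) (δ/2) ≠ 0 := fun x =>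
    ne_of_gt (lt_of_lt_of_le (by positivity) (le_max_right _ _))
  have hψcont : Continuous ψ := by
    rw [hψfun]
    apply Continuous.if_le _ _ continuous_id' continuous_const _
    · exact continuous_const
    · apply Continuous.if_le _ _ continuous_id' continuous_const _
      · exact hP₁cont
      · apply Continuous.if_le _ _ continuous_id' continuous_const _
        · exact (continuous_const.add (continuous_const.mul
            (continuous_id.sub continuous_const))).div (hQcont.max continuous_const) hQmaxne
        · exact ((Real.continuous_sinh.comp (continuous_id.div_const 2)).div
            (Real.continuous_cosh.comp (continuous_id.div_const 2))
            (fun x => ne_of_gt (Real.cosh_pos _))).div_const 2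
        · intro x hx
          have hxb : x = b := hx
          subst hxb
          rw [hmaxQ x ⟨hmb.le, le_refl x⟩, hQb]
          simp only [sub_self, mul_zero, add_zero]
          rw [hAdef, hBdef]
          ring
      · intro x hx
        have hxm : x = m := hx
        subst hxm
        rw [if_pos hmb.le, hP₁m, hmaxQ x ⟨le_refl x, hmb.le⟩, hQm, hvdef]
    · intro x hx
      have hxa : x = a := hx
      subst hxa
      rw [if_pos ham.le, hP₁a]
  -- G and h
  obtain ⟨G, hGfun⟩ : ∃ G : ℝ → ℝ, G = fun r => Real.log δ + ∫ t in m..r, ψ t := ⟨_, rfl⟩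
  have hGd : ∀ r, HasDerivAt G (ψ r) r := by
    intro r
    rw [hGfun]
    exact ((hψcont.integral_hasStrictDerivAt m r).hasDerivAt).const_add (Real.log δ)
  have hGm : G m = Real.log δ := by
    rw [hGfun]; simp
  obtain ⟨h, hhfun⟩ : ∃ h : ℝ → ℝ, h = fun r => Real.exp (G r) := ⟨_, rfl⟩
  have hhr : ∀ r, h r = Real.exp (G r) := fun r => by rw [hhfun]
  have hhpos : ∀ r, 0 < h r := fun r => by rw [hhr]; exact Real.exp_pos _
  have hhd : ∀ r, HasDerivAt h (Real.exp (G r) * ψ r) r := by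
    intro r
    rw [hhfun]
    exact (hGd r).exp
  have hderiv_h : deriv h = fun r => Real.exp (G r) * ψ r := funext fun r => (hhd r).deriv
  -- G = P on [a, m]
  have hGP : ∀ x ∈ Icc a m, G x = P x := by
    have key := aux_diff_const (f := G) (g := P) (φ := ψ) (c := a) (d := m)
      (fun x _ => hGd x) (fun x hx => by rw [hψ₂ x hx]; exact hPd x)
    have h0 : G a - P a = 0 := by
      have h1 := key m ⟨ham.le, le_refl m⟩
      rw [hGm, hPm] at h1
      linarith
    intro x hx
    have h2 := key x hx
    rw [h0] at h2
    linarith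
  have hPa : P a = a/2 := by rw [hPr]; simp
  have hGa : G a = a/2 := by rw [hGP a ⟨le_refl a, ham.le⟩, hPa]
  -- below a
  have hbelow : ∀ r, r ≤ a → h r = Real.exp (r/2) := by
    intro r hr
    have key := aux_diff_const (f := G) (g := fun x => x/2) (φ := ψ) (c := r) (d := a)
      (fun x _ => hGd x)
      (fun x hx => by
        rw [hψ₁ x hx.2]
        simpa using (hasDerivAt_id x).div_const 2)
    have h1 := key a ⟨hr, le_refl a⟩
    rw [hGa] at h1
    have h2 : G r = r/2 := by linarith
    rw [hhr, h2]
  -- on [m, b]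
  have hGQ : ∀ x ∈ Icc m b, G x = Real.log (Q x) := by
    have key := aux_diff_const (f := G) (g := fun x => Real.log (Q x)) (φ := ψ) (c := m) (d := b)
      (fun x _ => hGd x)
      (fun x hx => by
        rw [hψ₃ x hx]
        exact (hQd x).log (ne_of_gt (hQpos x hx)))
    intro x hx
    have h1 := key x hx
    simp only [hGm, hQm, sub_self] at h1
    linarith
  have hmid : ∀ r ∈ Icc m b, h r = Q r := by
    intro r hr
    rw [hhr, hGQ r hr, Real.exp_log (hQpos r hr)]
  have hGb : G b = Real.log A := by
    rw [hGQ b ⟨hmb.le, le_refl b⟩, hQb]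
  -- above b
  have habove : ∀ r, b ≤ r → h r = Real.cosh (r/2) := by
    intro r hr
    have key := aux_diff_const (f := G) (g := fun x => Real.log (Real.cosh (x/2))) (φ := ψ)
      (c := b) (d := r)
      (fun x _ => hGd x)
      (fun x hx => by
        rw [hψ₄ x hx.1]
        have h1 : HasDerivAt (fun y : ℝ => Real.cosh (y/2)) (Real.sinh (x/2) * (1/2)) x := by
          have h0 := (Real.hasDerivAt_cosh (x/2)).comp x ((hasDerivAt_id x).div_const 2)
          exact h0
        have h2 := h1.log (ne_of_gt (Real.cosh_pos _))
        convert h2 using 1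
        ring)
    have h3 := key r ⟨hr, le_refl r⟩
    simp only [hGb, hAdef, sub_self] at h3
    have h4 : G r = Real.log (Real.cosh (r/2)) := by linarith
    rw [hhr, h4, Real.exp_log (Real.cosh_pos _)]
  -- global regularity & monotonicity
  have hGdiff : Differentiable ℝ G := fun x => (hGd x).differentiableAt
  have hc1 : ContDiff ℝ 1 h := by
    rw [contDiff_one_iff_deriv]
    refine ⟨fun x => (hhd x).differentiableAt, ?_⟩
    rw [hderiv_h]
    exact (Real.continuous_exp.comp hGdiff.continuous).mul hψcont
  have hmono : StrictMono h := by
    apply strictMono_of_deriv_pos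
    intro x
    rw [hderiv_h]
    exact mul_pos (Real.exp_pos _) (hψpos x)
  -- smooth middle piece
  have hPsmooth : ContDiff ℝ (⊤ : WithTop ℕ∞) P := by
    rw [hPfun]
    exact (contDiff_id.div_const 2).add (contDiff_const.mul
      (((contDiff_id.sub contDiff_const).div_const L).pow 6))
  have hsm : ContDiffOn ℝ (⊤ : WithTop ℕ∞) h (Ioo a m) := by
    apply ((Real.contDiff_exp.comp hPsmooth).contDiffOn).congr
    intro x hx
    rw [hhr, hGP x (Ioo_subset_Icc_self hx)]
    rfl
  have hx01 : ∀ r ∈ Ioo a m, 0 < (r - a)/L ∧ (r - a)/L < 1 := by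
    intro r hr
    constructor
    · exact div_pos (by linarith [hr.1]) hLpos
    · rw [div_lt_one hLpos]
      have hmal : m = a + L := by rw [hadef]; ring
      linarith [hr.2]
  have hP₁bounds : ∀ r ∈ Ioo a m, 1/2 ≤ P₁ r ∧ P₁ r ≤ 3/4 := by
    intro r hr
    obtain ⟨hx0, hx1⟩ := hx01 r hr
    rw [hP₁r]
    constructor
    · have h3 : 0 ≤ (v - 1/2)*((r - a)/L)^5 :=
        mul_nonneg (by linarith) (pow_nonneg hx0.le 5)
      linarith
    · have h5 : ((r - a)/L)^5 ≤ 1 := pow_le_one₀ hx0.le hx1.le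
      have h6 : (v - 1/2)*((r - a)/L)^5 ≤ (v - 1/2)*1 :=
        mul_le_mul_of_nonneg_left h5 (by linarith)
      linarith
  have hP₂pos : ∀ r ∈ Ioo a m, 0 < P₂ r := by
    intro r hr
    rw [hP₂r]
    exact mul_pos (by positivity) (pow_pos (hx01 r hr).1 4)
  have hevd : ∀ r ∈ Ioo a m, deriv h =ᶠ[nhds r] fun x => Real.exp (P x) * P₁ x := by
    intro r hr
    apply Filter.eventuallyEq_of_mem (isOpen_Ioo.mem_nhds hr)
    intro x hx
    have h1 := congrFun hderiv_h x
    rw [h1]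
    rw [hGP x (Ioo_subset_Icc_self hx), hψ₂ x (Ioo_subset_Icc_self hx)]
  have hdd : ∀ r ∈ Ioo a m, deriv (deriv h) r
      = Real.exp (P r) * P₁ r * P₁ r + Real.exp (P r) * P₂ r := by
    intro r hr
    rw [Filter.EventuallyEq.deriv_eq (hevd r hr)]
    exact (((hPd r).exp).mul (hP₁d r)).deriv
  -- assemble
  refine ⟨a, m, h, ham, hmb, hc1, hhpos, hmono, habove, ?_, (hsm.of_le le_top), ?_, ?_, ?_, hbelow⟩
  · intro r hr
    rw [hmid r hr, hQr, hAdef, hBdef]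
    ring
  · intro r hr
    rw [hdd r hr]
    have h1 := (hP₁bounds r hr).1
    have h2 := hP₂pos r hr
    have h3 : h r = Real.exp (P r) := by rw [hhr, hGP r (Ioo_subset_Icc_self hr)]
    rw [h3]
    have h4 : Real.exp (P r)*(1/4) ≤ Real.exp (P r)*(P₁ r*P₁ r) :=
      mul_le_mul_of_nonneg_left (by nlinarith only [h1]) (Real.exp_pos (P r)).le
    have h5 : 0 < Real.exp (P r) * P₂ r := mul_pos (Real.exp_pos _) h2
    linarith only [h4, h5]
  · intro r hr
    have hlogh : (fun x => Real.log (h x)) = G := funext fun x => by rw [hhr, Real.log_exp]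
    rw [hlogh]
    have hderiv_G : deriv G = ψ := funext fun x => (hGd x).deriv
    rw [hderiv_G]
    have hev2 : ψ =ᶠ[nhds r] P₁ := Filter.eventuallyEq_of_mem (isOpen_Ioo.mem_nhds hr)
      (fun x hx => hψ₂ x (Ioo_subset_Icc_self hx))
    rw [Filter.EventuallyEq.deriv_eq hev2, (hP₁d r).deriv]
    exact hP₂pos r hr
  · intro r hr
    have h1 := congrFun hderiv_h r
    rw [h1, hhr, mul_comm, mul_div_assoc, div_self (ne_of_gt (Real.exp_pos _)), mul_one]
    rw [hψ₂ r (Ioo_subset_Icc_self hr)]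
    exact ⟨(hP₁bounds r hr).1, (hP₁bounds r hr).2⟩
end

section
/- There exists ε₀ > 0 such that for every ε ∈ (0, ε₀) the following holds. Let r_ε be the unique solution in (0,1) of ε e^r = sinh(r/2) and let c_ε = r_ε − ε⁴. Then there exist d_ε ∈ (r_ε, r_ε + ε⁴] and a continuously differentiable function v : ℝ → ℝ such that: (1) v is positive and increasing; (2) v(r) = sinh(r/2) for all r ≥ d_ε; (3) v(r) = ε e^r for all r ≤ c_ε; (4) on the interval (c_ε, d_ε), v is infinitely differentiable, v′′ > v, and (ln v)′′ > 0. -/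
open Real Set Filter

/-- 2·sinh(y/2) < cosh(y/2) for 0 < y ≤ 1. -/
lemma aux_cosh_gt (y : ℝ) (hy1 : y ≤ 1) : 2 * Real.sinh (y/2) < Real.cosh (y/2) := by
  have h1 : Real.exp y < 3 := by
    have := Real.exp_one_lt_d9
    have h2 : Real.exp y ≤ Real.exp 1 := Real.exp_le_exp.mpr hy1
    linarith
  have h2 : Real.exp (y/2) * Real.exp (-(y/2)) = 1 := by
    rw [← Real.exp_add]; simp
  have h3 : Real.exp (y/2) * Real.exp (y/2) = Real.exp y := by
    rw [← Real.exp_add]; ring_nf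
  have h4 := Real.exp_pos (y/2)
  have h5 := Real.exp_pos (-(y/2))
  rw [Real.sinh_eq, Real.cosh_eq]
  nlinarith [Real.exp_pos (y/2)]

/-- The gluing lemma. -/
lemma aux_glue (ε c d m : ℝ) (hε : 0 < ε) (hcd : c < d) (hd0 : 0 < d) (hm : 0 < m)
    (hval : ε * Real.exp (d + m/2*(d-c)^2) = Real.sinh (d/2))
    (hder : 1 + m*(d-c) = Real.cosh (d/2) / (2 * Real.sinh (d/2))) :
    ∃ v : ℝ → ℝ, ContDiff ℝ 1 v ∧ (∀ r, 0 < v r) ∧ StrictMono v ∧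
      (∀ r, d ≤ r → v r = Real.sinh (r/2)) ∧ (∀ r, r ≤ c → v r = ε * Real.exp r) ∧
      ContDiffOn ℝ (⊤ : ℕ∞) v (Set.Ioo c d) ∧
      (∀ r ∈ Set.Ioo c d, v r < deriv (deriv v) r) ∧
      (∀ r ∈ Set.Ioo c d, 0 < deriv (deriv (fun x => Real.log (v x))) r) := by
  have hsinh : 0 < Real.sinh (d/2) := Real.sinh_pos_iff.mpr (by linarith)
  set g : ℝ → ℝ := fun x => x + m/2*(x-c)^2 with hgdef
  set M : ℝ → ℝ := fun x => ε * Real.exp (g x) with hMdef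
  set v : ℝ → ℝ := fun r => if r ≤ c then ε * Real.exp r else if r ≤ d then M r else Real.sinh (r/2) with hvdef
  set w : ℝ → ℝ := fun r => if r ≤ c then ε * Real.exp r else if r ≤ d then M r * (1 + m*(r-c)) else Real.cosh (r/2) / 2 with hwdef
  have hgc : g c = c := by simp [hgdef]
  have hMc : M c = ε * Real.exp c := by simp [hMdef, hgc]
  have hMd : M d = Real.sinh (d/2) := hval
  have hg : ∀ x, HasDerivAt g (1 + m*(x-c)) x := by
    intro x
    have h1 : HasDerivAt (fun y : ℝ => (y - c)^2) (2*(x-c)) x := by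
      simpa using ((hasDerivAt_id x).sub_const c).fun_pow 2
    have := (hasDerivAt_id x).add (h1.const_mul (m/2))
    exact this.congr_deriv (by ring)
  have hM : ∀ x, HasDerivAt M (M x * (1 + m*(x-c))) x := by
    intro x
    have := ((hg x).exp).const_mul ε
    exact this.congr_deriv (by simp [hMdef]; ring)
  have hMderd : M d * (1 + m*(d-c)) = Real.cosh (d/2) / 2 := by
    rw [hMd, hder]
    field_simp
  have hS : ∀ x, HasDerivAt (fun y => Real.sinh (y/2)) (Real.cosh (x/2) / 2) x := by
    intro x
    have := ((hasDerivAt_id x).div_const 2).sinh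
    simpa [div_eq_mul_inv, mul_comm] using this
  -- v has derivative w everywhere
  have hIicIcc : Set.Iic c ∪ Set.Icc c d = Set.Iic d := by
    ext x
    simp only [Set.mem_union, Set.mem_Iic, Set.mem_Icc]
    constructor
    · rintro (h | ⟨h1, h2⟩) <;> linarith
    · intro h
      rcases le_total x c with h' | h'
      · exact Or.inl h'
      · exact Or.inr ⟨h', h⟩
  have hIccIci : Set.Icc c d ∪ Set.Ici d = Set.Ici c := by
    ext x
    simp only [Set.mem_union, Set.mem_Icc, Set.mem_Ici]
    constructor
    · rintro (⟨h1, h2⟩ | h) <;> linarith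
    · intro h
      rcases le_total x d with h' | h'
      · exact Or.inl ⟨h, h'⟩
      · exact Or.inr h'
  have hP : ∀ x : ℝ, HasDerivAt (fun y => ε * Real.exp y) (ε * Real.exp x) x := by
    intro x
    simpa using (Real.hasDerivAt_exp x).const_mul ε
  have hvIic : ∀ x ∈ Set.Iic c, v x = ε * Real.exp x := fun x hx => if_pos hx
  have hvIcc : ∀ x ∈ Set.Icc c d, v x = M x := by
    intro x hx
    by_cases hxc : x ≤ c
    · have : x = c := le_antisymm hxc hx.1
      subst this
      rw [hvIic x (Set.mem_Iic.mpr le_rfl), hMc]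
    · simp only [hvdef, if_neg hxc, if_pos hx.2]
  have hvIci : ∀ x ∈ Set.Ici d, v x = Real.sinh (x/2) := by
    intro x hx
    by_cases hxd : x ≤ d
    · have hxeq : x = d := le_antisymm hxd hx
      subst hxeq
      have : v x = M x := hvIcc x ⟨hcd.le, le_rfl⟩
      rw [this, hMd]
    · simp only [hvdef, if_neg (by linarith [lt_of_not_ge hxd] : ¬ x ≤ c), if_neg hxd]
  have hv : ∀ r, HasDerivAt v (w r) r := by
    intro r
    rcases lt_trichotomy r c with hrc | hrc | hrc
    · have hw : w r = ε * Real.exp r := if_pos hrc.le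
      rw [hw]
      refine (hP r).congr_of_eventuallyEq ?_
      filter_upwards [Iio_mem_nhds hrc] with x hx
      exact hvIic x (Set.mem_Iic.mpr (le_of_lt hx))
    · subst hrc
      have hw : w r = ε * Real.exp r := if_pos le_rfl
      rw [hw]
      have hL : HasDerivWithinAt v (ε * Real.exp r) (Set.Iic r) r :=
        ((hP r).hasDerivWithinAt).congr hvIic (hvIic r (Set.mem_Iic.mpr le_rfl))
      have hR : HasDerivWithinAt v (ε * Real.exp r) (Set.Icc r d) r := by
        have h1 : M r * (1 + m*(r-r)) = ε * Real.exp r := by rw [hMc]; ring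
        exact (h1 ▸ (hM r).hasDerivWithinAt).congr hvIcc (hvIcc r ⟨le_rfl, hcd.le⟩)
      exact (hL.union hR).hasDerivAt (by rw [hIicIcc]; exact Iic_mem_nhds hcd)
    · rcases lt_trichotomy r d with hrd | hrd | hrd
      · have hw : w r = M r * (1 + m*(r-c)) := by
          rw [hwdef]
          simp only [if_neg (not_le.mpr hrc), if_pos hrd.le]
        rw [hw]
        refine (hM r).congr_of_eventuallyEq ?_
        filter_upwards [Ioo_mem_nhds hrc hrd] with x hx
        exact hvIcc x ⟨hx.1.le, hx.2.le⟩
      · subst hrd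
        have hw : w r = M r * (1 + m*(r-c)) := by
          rw [hwdef]
          simp only [if_neg (not_le.mpr hrc), if_pos le_rfl]
        rw [hw, hMderd]
        have hL : HasDerivWithinAt v (Real.cosh (r/2) / 2) (Set.Icc c r) r :=
          (hMderd ▸ (hM r).hasDerivWithinAt).congr hvIcc (hvIcc r ⟨hcd.le, le_rfl⟩)
        have hR : HasDerivWithinAt v (Real.cosh (r/2) / 2) (Set.Ici r) r :=
          ((hS r).hasDerivWithinAt).congr hvIci (hvIci r (Set.mem_Ici.mpr le_rfl))
        exact (hL.union hR).hasDerivAt (by rw [hIccIci]; exact Ici_mem_nhds hrc)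
      · have hw : w r = Real.cosh (r/2) / 2 := by
          rw [hwdef]
          simp only [if_neg (by linarith : ¬ r ≤ c), if_neg (not_le.mpr hrd)]
        rw [hw]
        refine (hS r).congr_of_eventuallyEq ?_
        filter_upwards [Ioi_mem_nhds hrd] with x hx
        exact hvIci x (Set.mem_Ici.mpr (le_of_lt (Set.mem_Ioi.mp hx)))
  have hderiv : ∀ r, deriv v r = w r := fun r => (hv r).deriv
  have hMpos : ∀ x, 0 < M x := fun x => mul_pos hε (Real.exp_pos _)
  have hwpos : ∀ r, 0 < w r := by
    intro r
    rw [hwdef]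
    by_cases h1 : r ≤ c
    · simp only [if_pos h1]
      positivity
    · by_cases h2 : r ≤ d
      · simp only [if_neg h1, if_pos h2]
        have : (0:ℝ) < 1 + m*(r-c) := by nlinarith [lt_of_not_ge h1]
        exact mul_pos (hMpos r) this
      · simp only [if_neg h1, if_neg h2]
        positivity
  have hvpos : ∀ r, 0 < v r := by
    intro r
    rw [hvdef]
    by_cases h1 : r ≤ c
    · simp only [if_pos h1]; positivity
    · by_cases h2 : r ≤ d
      · simp only [if_neg h1, if_pos h2]; exact hMpos r
      · simp only [if_neg h1, if_neg h2]
        exact Real.sinh_pos_iff.mpr (by linarith [lt_of_not_ge h2])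
  have hwcont : Continuous w := by
    have hMc' : Continuous fun x => M x * (1 + m*(x-c)) := by
      rw [hMdef, hgdef]
      fun_prop
    have hinner : Continuous fun r : ℝ => if r ≤ d then M r * (1 + m*(r-c)) else Real.cosh (r/2) / 2 := by
      refine Continuous.if_le hMc' (by fun_prop) continuous_id continuous_const ?_
      intro x hx
      subst hx
      exact hMderd
    refine Continuous.if_le (by fun_prop) hinner continuous_id continuous_const ?_
    intro x hx
    subst hx
    simp only [if_pos hcd.le]
    rw [hMc]; ring
  have hC1 : ContDiff ℝ 1 v := by
    rw [contDiff_one_iff_deriv]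
    refine ⟨fun r => (hv r).differentiableAt, ?_⟩
    have : deriv v = w := funext hderiv
    rw [this]
    exact hwcont
  have hmono : StrictMono v := strictMono_of_deriv_pos (fun r => (hderiv r) ▸ hwpos r)
  have hMsmooth : ContDiff ℝ (⊤ : ℕ∞) M := by
    rw [hMdef, hgdef]
    fun_prop
  have hvIoo : ∀ x ∈ Set.Ioo c d, v x = M x := fun x hx => hvIcc x ⟨hx.1.le, hx.2.le⟩
  have hsmoothOn : ContDiffOn ℝ (⊤ : ℕ∞) v (Set.Ioo c d) :=
    (hMsmooth.contDiffOn).congr hvIoo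
  -- second derivative facts on Ioo c d
  have hderiv_eqM : ∀ x ∈ Set.Ioo c d, deriv v x = M x * (1 + m*(x-c)) := by
    intro x hx
    rw [hderiv x, hwdef]
    simp only [if_neg (not_le.mpr hx.1), if_pos hx.2.le]
  have hsecond : ∀ r ∈ Set.Ioo c d, deriv (deriv v) r = M r * ((1 + m*(r-c))^2 + m) := by
    intro r hr
    have hev : deriv v =ᶠ[nhds r] (fun x => M x * (1 + m*(x-c))) :=
      eventuallyEq_of_mem (isOpen_Ioo.mem_nhds hr) hderiv_eqM
    rw [hev.deriv_eq]
    have hlin : HasDerivAt (fun x : ℝ => 1 + m*(x-c)) m r := by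
      simpa using (((hasDerivAt_id r).sub_const c).const_mul m).const_add 1
    have := (hM r).fun_mul hlin
    rw [this.deriv]
    ring
  have hconc : ∀ r ∈ Set.Ioo c d, v r < deriv (deriv v) r := by
    intro r hr
    rw [hsecond r hr, hvIoo r hr]
    have h1 : 0 < m * (r - c) := mul_pos hm (by linarith [hr.1])
    nlinarith [hMpos r, mul_pos (hMpos r) h1, mul_pos (hMpos r) hm,
      mul_nonneg (hMpos r).le (sq_nonneg (m*(r-c)))]
  have hlog : ∀ r ∈ Set.Ioo c d, 0 < deriv (deriv (fun x => Real.log (v x))) r := by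
    intro r hr
    have hLeq : ∀ x ∈ Set.Ioo c d, Real.log (v x) = Real.log ε + g x := by
      intro x hx
      rw [hvIoo x hx, hMdef]
      simp only
      rw [Real.log_mul hε.ne' (Real.exp_ne_zero _), Real.log_exp]
    have hLd : ∀ x ∈ Set.Ioo c d, deriv (fun y => Real.log (v y)) x = 1 + m*(x-c) := by
      intro x hx
      have hev : (fun y => Real.log (v y)) =ᶠ[nhds x] (fun y => Real.log ε + g y) :=
        eventuallyEq_of_mem (isOpen_Ioo.mem_nhds hx) hLeq
      rw [hev.deriv_eq]
      exact ((hg x).const_add (Real.log ε)).deriv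
    have hev2 : deriv (fun y => Real.log (v y)) =ᶠ[nhds r] (fun x => 1 + m*(x-c)) :=
      eventuallyEq_of_mem (isOpen_Ioo.mem_nhds hr) hLd
    rw [hev2.deriv_eq]
    have hlin : HasDerivAt (fun x : ℝ => 1 + m*(x-c)) m r := by
      simpa using (((hasDerivAt_id r).sub_const c).const_mul m).const_add 1
    rw [hlin.deriv]
    exact hm
  exact ⟨v, hC1, hvpos, hmono, hvIci, hvIic, hsmoothOn, hconc, hlog⟩

/-- Existence of the C¹ warping function v bending ε e^r into sinh(r/2), with
c_ε = r_ε − ε⁴ and d_ε ∈ (r_ε, r_ε + ε⁴]. -/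
theorem stmt_6 :
    ∃ ε₀ : ℝ, 0 < ε₀ ∧
      ∀ ε : ℝ, 0 < ε → ε < ε₀ →
        ∀ rε : ℝ, rε ∈ Set.Ioo (0:ℝ) 1 → ε * Real.exp rε = Real.sinh (rε/2) →
          ∃ dε : ℝ, ∃ v : ℝ → ℝ,
            dε ∈ Set.Ioc rε (rε + ε^4) ∧
            ContDiff ℝ 1 v ∧
            (∀ r, 0 < v r) ∧ StrictMono v ∧
            (∀ r, dε ≤ r → v r = Real.sinh (r/2)) ∧
            (∀ r, r ≤ rε - ε^4 → v r = ε * Real.exp r) ∧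
            ContDiffOn ℝ (⊤ : ℕ∞) v (Set.Ioo (rε - ε^4) dε) ∧
            (∀ r ∈ Set.Ioo (rε - ε^4) dε, v r < deriv (deriv v) r) ∧
            (∀ r ∈ Set.Ioo (rε - ε^4) dε,
              0 < deriv (deriv (fun x => Real.log (v x))) r) := by
  refine ⟨1/100, by norm_num, ?_⟩
  intro ε hε hε100 rε hrmem heq
  obtain ⟨hr0, hr1⟩ := hrmem
  have hε4 : (0:ℝ) < ε^4 := by positivity
  have hε4small : ε^4 < 1/100 := by
    have h1 : ε^4 < (1/100:ℝ)^4 := pow_lt_pow_left₀ hε100 hε.le (by norm_num)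
    nlinarith
  set c : ℝ := rε - ε^4 with hc
  set D : ℝ := rε + ε^4 with hD
  have hsr : 0 < Real.sinh (rε/2) := Real.sinh_pos_iff.mpr (by linarith)
  -- rε is small
  have hr_small : rε < 1/10 := by
    have h1 : rε/2 < Real.sinh (rε/2) := (Real.self_lt_sinh_iff).mpr (by linarith)
    have h2 : Real.exp rε < Real.exp 1 := Real.exp_lt_exp.mpr hr1
    have h3 := Real.exp_one_lt_d9
    nlinarith
  have hD_small : D < 1/10 + 1/100 := by rw [hD]; linarith
  -- the slope function
  set s : ℝ → ℝ := fun x => Real.cosh (x/2) / (2 * Real.sinh (x/2)) with hs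
  have hsinh_pos : ∀ x : ℝ, 0 < x → 0 < Real.sinh (x/2) :=
    fun x hx => Real.sinh_pos_iff.mpr (by linarith)
  have hs_gt1 : ∀ x : ℝ, 0 < x → x ≤ 1 → 1 < s x := by
    intro x hx hx1
    rw [hs]
    rw [one_lt_div (by linarith [hsinh_pos x hx] : (0:ℝ) < 2 * Real.sinh (x/2))]
    exact aux_cosh_gt x hx1
  -- log of sinh and its derivative
  have hf' : ∀ x : ℝ, 0 < x → HasDerivAt (fun y => Real.log (Real.sinh (y/2))) (s x) x := by
    intro x hx
    have h1 : HasDerivAt (fun y : ℝ => Real.sinh (y/2)) (Real.cosh (x/2) * (1/2)) x :=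
      ((hasDerivAt_id x).div_const 2).sinh
    have h2 := h1.log (ne_of_gt (hsinh_pos x hx))
    convert h2 using 1
    rw [hs]
    ring
  -- the defining equation in log form: log (sinh (rε/2)) = log ε + rε
  have hεne : ε ≠ 0 := ne_of_gt hε
  have hlog_rε : Real.log (Real.sinh (rε/2)) = Real.log ε + rε := by
    rw [← heq, Real.log_mul hεne (Real.exp_ne_zero _), Real.log_exp]
  -- the function F
  set F : ℝ → ℝ := fun x => x + (s x - 1)*(x - c)/2 - Real.log (Real.sinh (x/2) / ε) with hF
  have hlogdiv : ∀ x : ℝ, 0 < x →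
      Real.log (Real.sinh (x/2) / ε) = Real.log (Real.sinh (x/2)) - Real.log ε := fun x hx =>
    Real.log_div (ne_of_gt (hsinh_pos x hx)) hεne
  have hFrε : 0 < F rε := by
    have h1 : Real.log (Real.sinh (rε/2) / ε) = rε := by
      rw [hlogdiv rε hr0, hlog_rε]; ring
    have h2 : F rε = (s rε - 1) * ε^4 / 2 := by
      rw [hF]; simp only; rw [h1, hc]; ring
    rw [h2]
    have := hs_gt1 rε hr0 (by linarith)
    nlinarith
  -- s is strictly decreasing (what we need: s D < s t for t < D)
  have hs_anti : ∀ t : ℝ, 0 < t → t < D → s D < s t := by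
    intro t ht htD
    have h1 : 0 < Real.sinh (t/2) := hsinh_pos t ht
    have h2 : 0 < Real.sinh (D/2) := hsinh_pos D (by linarith)
    rw [hs]
    simp only
    rw [div_lt_div_iff₀ (by linarith) (by linarith)]
    have h3 : 0 < Real.sinh (D/2 - t/2) := Real.sinh_pos_iff.mpr (by linarith)
    rw [Real.sinh_sub] at h3
    nlinarith
  have hFD : F D < 0 := by
    -- MVT
    have hcont : ContinuousOn (fun y => Real.log (Real.sinh (y/2))) (Set.Icc rε D) := by
      intro x hx
      exact (hf' x (lt_of_lt_of_le hr0 hx.1)).continuousAt.continuousWithinAt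
    obtain ⟨t, htmem, hteq⟩ := exists_hasDerivAt_eq_slope (fun y => Real.log (Real.sinh (y/2))) s
      (by rw [hD]; linarith) hcont (fun x hx => hf' x (lt_trans hr0 hx.1))
    have hDr : D - rε = ε^4 := by rw [hD]; ring
    have h1 : Real.log (Real.sinh (D/2)) - Real.log (Real.sinh (rε/2)) = s t * ε^4 := by
      rw [hteq, hDr]
      field_simp
    have h2 : s D < s t := hs_anti t (lt_trans hr0 htmem.1) htmem.2
    have h3 : F D = Real.log (Real.sinh (rε/2)) + s D * ε^4 - Real.log (Real.sinh (D/2)) := by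
      rw [hF]
      simp only
      rw [hlogdiv D (by linarith), hlog_rε, hD, hc]
      ring
    rw [h3]
    nlinarith
  -- continuity of F on Icc rε D
  have hFcont : ContinuousOn F (Set.Icc rε D) := by
    have hne : ∀ x ∈ Set.Icc rε D, Real.sinh (x/2) ≠ 0 :=
      fun x hx => ne_of_gt (hsinh_pos x (lt_of_lt_of_le hr0 hx.1))
    have hsinh_cont : ContinuousOn (fun x : ℝ => Real.sinh (x/2)) (Set.Icc rε D) := by fun_prop
    have hcosh_cont : ContinuousOn (fun x : ℝ => Real.cosh (x/2)) (Set.Icc rε D) := by fun_prop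
    have hscont : ContinuousOn s (Set.Icc rε D) := by
      rw [hs]
      exact hcosh_cont.div (continuousOn_const.mul hsinh_cont)
        (fun x hx => by simpa using hne x hx)
    have hlogcont : ContinuousOn (fun x => Real.log (Real.sinh (x/2) / ε)) (Set.Icc rε D) := by
      apply ContinuousOn.log (hsinh_cont.div_const ε)
      intro x hx
      exact div_ne_zero (hne x hx) hεne
    rw [hF]
    exact (continuousOn_id.add (((hscont.sub continuousOn_const).mul
      (continuousOn_id.sub continuousOn_const)).div_const 2)).sub hlogcont
  -- IVT
  have hsub := intermediate_value_Ioo' (by rw [hD]; linarith : rε ≤ D) hFcont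
  have h0mem : (0:ℝ) ∈ Set.Ioo (F D) (F rε) := ⟨hFD, hFrε⟩
  obtain ⟨dε, hdmem, hFd⟩ := hsub h0mem
  have hd1 : rε < dε := hdmem.1
  have hd2 : dε < D := hdmem.2
  have hd0 : 0 < dε := lt_trans hr0 hd1
  have hdc : 0 < dε - c := by rw [hc]; linarith
  set m : ℝ := (s dε - 1)/(dε - c) with hm
  have hsd1 : 1 < s dε := hs_gt1 dε hd0 (by rw [hD] at hd2; linarith)
  have hmpos : 0 < m := div_pos (by linarith) hdc
  have hmdc : m * (dε - c) = s dε - 1 := div_mul_cancel₀ _ (ne_of_gt hdc)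
  have hval : ε * Real.exp (dε + m/2*(dε-c)^2) = Real.sinh (dε/2) := by
    have h1 : dε + m/2*(dε-c)^2 = dε + (s dε - 1)*(dε - c)/2 := by
      have : m/2*(dε-c)^2 = (m * (dε - c)) * (dε - c) / 2 := by ring
      rw [this, hmdc]
    have h2 : dε + (s dε - 1)*(dε - c)/2 = Real.log (Real.sinh (dε/2) / ε) := by
      have := hFd
      rw [hF] at this
      simp only at this
      linarith [this]
    rw [h1, h2, Real.exp_log (div_pos (hsinh_pos dε hd0) hε)]
    field_simp
  have hder : 1 + m*(dε-c) = Real.cosh (dε/2) / (2 * Real.sinh (dε/2)) := by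
    rw [hmdc, hs]
    simp only
    ring
  obtain ⟨v, h1, h2, h3, h4, h5, h6, h7, h8⟩ :=
    aux_glue ε c dε m hε (by rw [hc]; linarith) hd0 hmpos hval hder
  exact ⟨dε, v, ⟨hd1, le_of_lt hd2⟩, h1, h2, h3, h4, h5, h6, h7, h8⟩
end

section
/- Fix k > 0. For e > 0 let f = (k+1)e, δ = f − e = ke, and C₃(e) = (1/δ²)(sinh(f) + (1/2)sinh(e/2)) + (1/δ³)(2cosh(e/2) − 2cosh(f)). Then the limit of e·C₃(e) as e → 0⁺ equals −3(k+1)/(4k³). -/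
open Filter Real

lemma sinh_div_self_lim : Filter.Tendsto (fun x : ℝ => Real.sinh x / x)
    (nhdsWithin 0 {(0:ℝ)}ᶜ) (nhds 1) := by
  have h := hasDerivAt_iff_tendsto_slope.mp (Real.hasDerivAt_sinh 0)
  simpa [slope_fun_def_field, Real.sinh_zero, Real.cosh_zero] using h

lemma sinh_mul_div_lim (c : ℝ) (hc : c ≠ 0) :
    Filter.Tendsto (fun e : ℝ => Real.sinh (c * e) / e)
      (nhdsWithin 0 (Set.Ioi 0)) (nhds c) := by
  have h1 : Filter.Tendsto (fun e : ℝ => c * e) (nhdsWithin 0 (Set.Ioi 0))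
      (nhdsWithin 0 {(0:ℝ)}ᶜ) := by
    apply tendsto_nhdsWithin_of_tendsto_nhds_of_eventually_within
    · exact ((continuous_mul_left c).tendsto' 0 0 (by simp)).mono_left nhdsWithin_le_nhds
    · filter_upwards [self_mem_nhdsWithin] with e he
      exact mul_ne_zero hc (ne_of_gt he)
  have h2 : Filter.Tendsto (fun e : ℝ => c * (Real.sinh (c * e) / (c * e)))
      (nhdsWithin 0 (Set.Ioi 0)) (nhds (c * 1)) :=
    (sinh_div_self_lim.comp h1).const_mul c
  rw [mul_one] at h2
  apply h2.congr'
  filter_upwards [self_mem_nhdsWithin] with e he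
  rw [mul_div_assoc', mul_div_mul_left _ _ hc]

lemma cosh_mul_div_lim (c : ℝ) (hc : c ≠ 0) :
    Filter.Tendsto (fun e : ℝ => (Real.cosh (c * e) - 1) / e ^ 2)
      (nhdsWithin 0 (Set.Ioi 0)) (nhds (c ^ 2 / 2)) := by
  have key : ∀ e : ℝ, Real.cosh (c * e) - 1 = 2 * Real.sinh (c / 2 * e) ^ 2 := by
    intro e
    have h2 : c * e = 2 * (c / 2 * e) := by ring
    rw [h2, Real.cosh_two_mul, Real.cosh_sq]
    ring
  have h2 : Filter.Tendsto (fun e : ℝ => 2 * (Real.sinh (c / 2 * e) / e) ^ 2)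
      (nhdsWithin 0 (Set.Ioi 0)) (nhds (2 * (c / 2) ^ 2)) :=
    ((sinh_mul_div_lim (c / 2) (div_ne_zero hc two_ne_zero)).pow 2).const_mul 2
  have heq : (2 : ℝ) * (c / 2) ^ 2 = c ^ 2 / 2 := by ring
  rw [heq] at h2
  apply h2.congr'
  filter_upwards [self_mem_nhdsWithin] with e he
  rw [key e]
  field_simp

/-- As e → 0⁺, e·C₃(e) tends to −3(k+1)/(4k³), where C₃ is the cubic coefficient
of the Hermite interpolant. -/
theorem stmt_9 (k : ℝ) (hk : 0 < k) :
    Filter.Tendsto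
      (fun e : ℝ =>
        e * ((1/(k*e)^2) * (Real.sinh ((k+1)*e) + (1/2) * Real.sinh (e/2))
          + (1/(k*e)^3) * (2 * Real.cosh (e/2) - 2 * Real.cosh ((k+1)*e))))
      (nhdsWithin 0 (Set.Ioi 0))
      (nhds (-3*(k+1)/(4*k^3))) := by
  have hk1 : (k + 1 : ℝ) ≠ 0 := by positivity
  have hk0 : k ≠ 0 := ne_of_gt hk
  have A := sinh_mul_div_lim (k + 1) hk1
  have B := sinh_mul_div_lim (1/2) (by norm_num)
  have C := cosh_mul_div_lim (1/2) (by norm_num)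
  have D := cosh_mul_div_lim (k + 1) hk1
  have G : Filter.Tendsto (fun e : ℝ =>
      (1/k^2) * (Real.sinh ((k+1)*e) / e) + (1/(2*k^2)) * (Real.sinh ((1/2)*e) / e)
        + (2/k^3) * ((Real.cosh ((1/2)*e) - 1) / e^2)
        - (2/k^3) * ((Real.cosh ((k+1)*e) - 1) / e^2))
      (nhdsWithin 0 (Set.Ioi 0))
      (nhds ((1/k^2) * (k+1) + (1/(2*k^2)) * (1/2)
        + (2/k^3) * ((1/2)^2/2) - (2/k^3) * ((k+1)^2/2))) :=
    (((A.const_mul _).add (B.const_mul _)).add (C.const_mul _)).sub (D.const_mul _)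
  have hval : (1/k^2) * (k+1) + (1/(2*k^2)) * (1/2)
      + (2/k^3) * ((1/2:ℝ)^2/2) - (2/k^3) * ((k+1)^2/2) = -3*(k+1)/(4*k^3) := by
    field_simp
    ring
  rw [hval] at G
  apply G.congr'
  filter_upwards [self_mem_nhdsWithin] with e he
  have he0 : e ≠ 0 := ne_of_gt he
  have h12 : (1/2 : ℝ) * e = e / 2 := by ring
  rw [h12]
  field_simp
  ring
end

section
/- Fix k > 0 and α ≥ 0. For e > 0 let φ_e be the cubic φ_e(r) = C₃(e)(r−e)³ + C₂(e)(r−e)² + (1/2)sinh(e/2)(r−e) + cosh(e/2) with C₂, C₃ as in the Hermite interpolation between cosh(r/2) and cosh(r) on [e, (k+1)e]. Then the limit as e → 0⁺ of the second derivative φ_e′′(e(1+α)) = 6C₃(e)·αe + 2C₂(e) equals −(9(k+1)/(2k³))·α + (4k²+12k+9)/(4k²). -/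
/-! Write `S_c(e) = sinh (c e) / e` and `K_c(e) = (cosh (c e) - 1) / e²`. After clearing the powers
of `k e`, the quantity `6 C₃(e) α e + 2 C₂(e)` is a fixed polynomial in `α`, `1/k` and the four
quotients `S_{k+1}, S_{1/2}, K_{k+1}, K_{1/2}`, whose limits as `e → 0` are `c` and `c² / 2`. -/

open Filter Real Topology

lemma tendsto_sinh_mul_div_self (c : ℝ) :
    Tendsto (fun e : ℝ => sinh (c * e) / e) (𝓝[≠] 0) (𝓝 c) := by
  have hderiv : HasDerivAt (fun e : ℝ => sinh (c * e)) c 0 := by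
    simpa using ((hasDerivAt_id (0 : ℝ)).const_mul c).sinh
  refine (hasDerivAt_iff_tendsto_slope_zero.mp hderiv).congr fun e => ?_
  simp [div_eq_inv_mul]

lemma cosh_sub_one_eq_two_mul_sinh_half_sq (x : ℝ) : cosh x - 1 = 2 * sinh (x / 2) ^ 2 := by
  have h := cosh_two_mul (x / 2)
  rw [mul_div_cancel₀ x two_ne_zero, cosh_sq] at h
  linarith

lemma tendsto_cosh_mul_sub_one_div_sq (c : ℝ) :
    Tendsto (fun e : ℝ => (cosh (c * e) - 1) / e ^ 2) (𝓝[≠] 0) (𝓝 (c ^ 2 / 2)) := by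
  have h := ((tendsto_sinh_mul_div_self (c / 2)).pow 2).const_mul 2
  rw [show 2 * (c / 2) ^ 2 = c ^ 2 / 2 by ring] at h
  refine h.congr fun e => ?_
  rw [cosh_sub_one_eq_two_mul_sinh_half_sq, div_pow, mul_div_assoc, mul_div_right_comm]

lemma hermite_second_deriv_eq (k α e : ℝ) (hk : k ≠ 0) (he : e ≠ 0) :
    6 * ((1/(k*e)^2) * (sinh ((k+1)*e) + (1/2) * sinh (e/2))
        + (1/(k*e)^3) * (2 * cosh (e/2) - 2 * cosh ((k+1)*e))) * (α * e)
      + 2 * (-(1/(k*e)) * (sinh ((k+1)*e) + sinh (e/2))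
        + (3/(k*e)^2) * (cosh ((k+1)*e) - cosh (e/2)))
    = 6 * α * ((sinh ((k+1)*e) / e + sinh (1/2*e) / e / 2) / k ^ 2
        + 2 * ((cosh (1/2*e) - 1) / e ^ 2 - (cosh ((k+1)*e) - 1) / e ^ 2) / k ^ 3)
      + 2 * (-(sinh ((k+1)*e) / e + sinh (1/2*e) / e) / k
        + 3 * ((cosh ((k+1)*e) - 1) / e ^ 2 - (cosh (1/2*e) - 1) / e ^ 2) / k ^ 2) := by
  rw [one_div_mul_eq_div]
  field_simp
  ring

theorem stmt_11_general (k α : ℝ) (hk : 0 < k) :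
    Filter.Tendsto
      (fun e : ℝ =>
        6 * ((1/(k*e)^2) * (Real.sinh ((k+1)*e) + (1/2) * Real.sinh (e/2))
            + (1/(k*e)^3) * (2 * Real.cosh (e/2) - 2 * Real.cosh ((k+1)*e)))
          * (α * e)
        + 2 * (-(1/(k*e)) * (Real.sinh ((k+1)*e) + Real.sinh (e/2))
            + (3/(k*e)^2) * (Real.cosh ((k+1)*e) - Real.cosh (e/2))))
      (nhdsWithin 0 (Set.Ioi 0))
      (nhds (-(9*(k+1)/(2*k^3)) * α + (4*k^2+12*k+9)/(4*k^2))) := by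
  have hS₁ := tendsto_sinh_mul_div_self (k + 1)
  have hS₂ := tendsto_sinh_mul_div_self (1 / 2)
  have hK₁ := tendsto_cosh_mul_sub_one_div_sq (k + 1)
  have hK₂ := tendsto_cosh_mul_sub_one_div_sq (1 / 2)
  have hcubic := (((hS₁.add (hS₂.div_const 2)).div_const (k ^ 2)).add
    (((hK₂.sub hK₁).const_mul 2).div_const (k ^ 3))).const_mul (6 * α)
  have hquadratic := (((hS₁.add hS₂).neg.div_const k).add
    (((hK₁.sub hK₂).const_mul 3).div_const (k ^ 2))).const_mul 2
  have hlim := hcubic.add hquadratic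
  have hvalue : 6 * α * ((k + 1 + 1 / 2 / 2) / k ^ 2 + 2 * ((1 / 2) ^ 2 / 2 - (k + 1) ^ 2 / 2) / k ^ 3)
        + 2 * (-(k + 1 + 1 / 2) / k + 3 * ((k + 1) ^ 2 / 2 - (1 / 2) ^ 2 / 2) / k ^ 2)
      = -(9*(k+1)/(2*k^3)) * α + (4*k^2+12*k+9)/(4*k^2) := by
    field_simp
    ring
  rw [← hvalue]
  refine (hlim.mono_left (nhdsWithin_mono 0 fun e he => ne_of_gt he)).congr' ?_
  filter_upwards [self_mem_nhdsWithin] with e he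
  exact (hermite_second_deriv_eq k α e hk.ne' (ne_of_gt he)).symm

/-- As e → 0⁺, the second derivative φ_e′′(e(1+α)) = 6C₃(e)·αe + 2C₂(e) tends to
−(9(k+1)/(2k³))α + (4k²+12k+9)/(4k²). -/
theorem stmt_11 (k α : ℝ) (hk : 0 < k) (hα : 0 ≤ α) :
    Filter.Tendsto
      (fun e : ℝ =>
        6 * ((1/(k*e)^2) * (Real.sinh ((k+1)*e) + (1/2) * Real.sinh (e/2))
            + (1/(k*e)^3) * (2 * Real.cosh (e/2) - 2 * Real.cosh ((k+1)*e)))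
          * (α * e)
        + 2 * (-(1/(k*e)) * (Real.sinh ((k+1)*e) + Real.sinh (e/2))
            + (3/(k*e)^2) * (Real.cosh ((k+1)*e) - Real.cosh (e/2))))
      (nhdsWithin 0 (Set.Ioi 0))
      (nhds (-(9*(k+1)/(2*k^3)) * α + (4*k^2+12*k+9)/(4*k^2))) :=
  stmt_11_general k α hk
end

section
/- There exists k₀ ≥ 1 such that for every real k ≥ k₀ and every α ∈ [0, k], one has 9/16 + (27/8)·α + (27/4 − 9/(4k²))·α² + (9/2 − 9/k²)·α³ − (3/(4k²))·α⁴ + (9/(2k²) − 27/(4k⁴))·α⁵ − (9/k⁴)·α⁶ ≥ 9/16. -/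
/-! In the variable `u = 1/k` the claim is the nonnegativity of a polynomial in `α` and `u`, and
`α ≤ k` becomes `α u ≤ 1`. The only negative terms, `u² α⁴ = u α³ (α u)` and `u⁴ α⁶ = u α³ (α u)³`,
are then at most `u α³`, and are absorbed by the `α³` term as soon as `u ≤ 1/4`. -/

lemma region6_poly_nonneg {u α : ℝ} (hu₀ : 0 ≤ u) (hu : u ≤ 1/4) (hα : 0 ≤ α)
    (hαu : α * u ≤ 1) :
    0 ≤ 27/8*α + (27/4 - 9/4*u^2)*α^2 + (9/2 - 9*u^2)*α^3 - 3/4*u^2*α^4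
      + (9/2*u^2 - 27/4*u^4)*α^5 - 9*u^4*α^6 := by
  have hα3u : 0 ≤ u * α^3 := by positivity
  have hquartic : u^2*α^4 ≤ u*α^3 := by
    have := mul_le_mul_of_nonneg_left hαu hα3u
    linarith [show u^2*α^4 = u*α^3*(α*u) by ring]
  have hsextic : u^4*α^6 ≤ u*α^3 := by
    have := mul_le_mul_of_nonneg_left (pow_le_one₀ (by positivity) hαu : (α*u)^3 ≤ 1) hα3u
    linarith [show u^4*α^6 = u*α^3*(α*u)^3 by ring]
  have hc2 : 0 ≤ 27/4 - 9/4*u^2 := by nlinarith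
  have hc3 : 0 ≤ 9/2 - 9*u^2 - 39/4*u := by nlinarith
  have hc5 : 0 ≤ 9/2*u^2 - 27/4*u^4 := by nlinarith [sq_nonneg u]
  calc (0:ℝ)
      ≤ 27/8*α + (27/4 - 9/4*u^2)*α^2 + (9/2 - 9*u^2 - 39/4*u)*α^3
          + (9/2*u^2 - 27/4*u^4)*α^5 := by positivity
    _ ≤ _ := by linarith

/-- Leading-order form of inequality (3b) in region 6. -/
theorem stmt_13 :
    ∃ k₀ : ℝ, 1 ≤ k₀ ∧
      ∀ k : ℝ, k₀ ≤ k → ∀ α : ℝ, α ∈ Set.Icc (0:ℝ) k →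
        9/16 ≤ 9/16 + (27/8)*α + (27/4 - 9/(4*k^2))*α^2 + (9/2 - 9/k^2)*α^3
          - (3/(4*k^2))*α^4 + (9/(2*k^2) - 27/(4*k^4))*α^5 - (9/k^4)*α^6 := by
  refine ⟨4, by norm_num, fun k hk₄ α ⟨hα, hαk⟩ => ?_⟩
  have hk : 0 < k := by linarith
  have hαu : α * k⁻¹ ≤ 1 := by rwa [← div_eq_mul_inv, div_le_one hk]
  have hu : k⁻¹ ≤ 1/4 := by rw [one_div]; exact inv_anti₀ (by norm_num) hk₄
  have := region6_poly_nonneg (inv_nonneg.2 hk.le) hu hα hαu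
  field_simp at this ⊢
  linarith
end

section
/- There exists k₀ ≥ 1 such that for every real k ≥ k₀ and every α ∈ [0, k], one has 6 + 24α + (36 − 18/k²)·α² − (48/k²)·α³ + (60/k²)·α⁴ − (108/k⁴)·α⁵ ≥ 6. -/
/-- Leading-order form of inequality (3a) in region 6. -/
theorem stmt_14 :
    ∃ k₀ : ℝ, 1 ≤ k₀ ∧
      ∀ k : ℝ, k₀ ≤ k → ∀ α : ℝ, α ∈ Set.Icc (0:ℝ) k →
        6 ≤ 6 + 24*α + (36 - 18/k^2)*α^2 - (48/k^2)*α^3 + (60/k^2)*α^4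
          - (108/k^4)*α^5 := by
  refine ⟨10, by norm_num, fun k hk α ⟨h0, h1⟩ => ?_⟩
  have hk0 : (0:ℝ) < k := by linarith
  have hk2 : (0:ℝ) < k^2 := by positivity
  have hk4 : (0:ℝ) < k^4 := by positivity
  rw [div_eq_mul_inv, div_eq_mul_inv, div_eq_mul_inv, div_eq_mul_inv]
  have hak : α / k ^ 2 ≤ 1 / 10 := by
    rw [div_le_div_iff₀ hk2 (by norm_num)]
    nlinarith
  have h2 : α^2 * (36 - 18/k^2 - 48 * (α/k^2)) ≥ 0 := by
    have : 18/k^2 ≤ 18/100 := by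
      apply div_le_div_of_nonneg_left (by norm_num) (by norm_num)
      nlinarith
    nlinarith [sq_nonneg α]
  have h4 : α^4 / k^2 * (60 - 108 * (α/k^2)) ≥ 0 := by
    apply mul_nonneg (by positivity)
    linarith
  have key : α^2 * (36 - 18/k^2 - 48 * (α/k^2)) + α^4 / k^2 * (60 - 108 * (α/k^2)) ≥ 0 := by
    linarith
  have expand : α^2 * (36 - 18/k^2 - 48 * (α/k^2)) + α^4 / k^2 * (60 - 108 * (α/k^2))
      = (36 - 18*(k^2)⁻¹)*α^2 - 48*(k^2)⁻¹*α^3 + 60*(k^2)⁻¹*α^4 - 108*(k^4)⁻¹*α^5 := by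
    field_simp
    ring
  nlinarith [key, expand]
end
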